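/- Let p : X̃ → X be a covering map of path-connected spaces corresponding to a subgroup H ≤ π₁(X, x₀), and let V₀ ⊆ X be a path-connected subspace containing x₀ whose inclusion induces an isomorphism π₁(V₀, x₀) ≅ H. Then the inclusion V₀ ↪ X lifts to an embedding of V₀ into X̃, i.e., there is a lift whose restriction to V₀ maps V₀ homeomorphically onto a component of p⁻¹(V₀). -/

import Mathlib

open CategoryTheory
open scoped FundamentalGroupoid

/-- The homomorphism `f_* : π₁(X, x) → π₁(Y, f x)` on fundamental groups induced by a
continuous map `f : X → Y`. -/
noncomputable def fundamentalGroupMap {X Y : Type} [TopologicalSpace X] [TopologicalSpace Y]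
    (f : C(X, Y)) (x : X) :
    Aut (FundamentalGroupoid.mk x) →* Aut (FundamentalGroupoid.mk (f x)) :=
  Functor.mapAut (FundamentalGroupoid.mk x) ((FundamentalGroupoid.fundamentalGroupoidFunctor.map (X := TopCat.of X) (Y := TopCat.of Y) (TopCat.ofHom f) :
      Grpd.of (FundamentalGroupoid X) ⟶ Grpd.of (FundamentalGroupoid Y)) :
      FundamentalGroupoid X ⥤ FundamentalGroupoid Y)

/-!
The lifting criterion, applied to the inclusion `V₀ ↪ X`, gives a lift `g` through `xt₀`. Since
`p ∘ g` is the embedding `V₀ ↪ X`, so is `g`. Its range is connected, hence lies in the component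
of `p⁻¹(V₀)` through `xt₀`; conversely `g ∘ p` and the identity are two lifts of `p` on
`p⁻¹(V₀)` which agree at `xt₀`, so they agree on that whole component.
-/

open Set Topology

theorem FundamentalGroup.mapOfEq_rfl {X Y : Type*} [TopologicalSpace X] [TopologicalSpace Y]
    (f : C(X, Y)) (x : X) : mapOfEq f (rfl : f x = f x) = map f x := by
  ext γ
  simp [mapOfEq_apply]

theorem FundamentalGroup.range_map_eq_map_range_fundamentalGroupMap {X Y : Type}
    [TopologicalSpace X] [TopologicalSpace Y] (f : C(X, Y)) (x : X) :
    (map f x).range = (fundamentalGroupMap f x).range.map (Aut.toEnd _) := by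
  have hsurj : Function.Surjective (Aut.toEnd (FundamentalGroupoid.mk x)) :=
    fun γ ↦ ⟨Groupoid.isoEquivHom _ _ |>.symm γ, rfl⟩
  have hcomm : (Aut.toEnd _).comp (fundamentalGroupMap f x) = (map f x).comp (Aut.toEnd _) := rfl
  rw [← MonoidHom.range_comp, hcomm, MonoidHom.range_comp,
    MonoidHom.range_eq_top_of_surjective _ hsurj, ← MonoidHom.range_eq_map]

theorem IsCoveringMap.range_eq_connectedComponentIn {E X : Type*} [TopologicalSpace E]
    [TopologicalSpace X] {p : E → X} (hp : IsCoveringMap p) {V : Set X} [PreconnectedSpace V]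
    (g : C(V, E)) (hgp : p ∘ g = Subtype.val) (v : V) :
    range g = connectedComponentIn (p ⁻¹' V) (g v) := by
  have hgp' (w : V) : p (g w) = w := congrFun hgp w
  have hv : g v ∈ p ⁻¹' V := by simp [mem_preimage, hgp']
  refine (isPreconnected_range g.continuous).subset_connectedComponentIn (mem_range_self v)
    (range_subset_iff.2 fun w ↦ by simp [mem_preimage, hgp']) |>.antisymm ?_
  have hlift : EqOn (g ∘ V.restrictPreimage p) Subtype.val (connectedComponent ⟨g v, hv⟩) :=
    hp.eqOn_of_comp_eqOn isPreconnected_connectedComponent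
      (g.continuous.comp hp.continuous.restrictPreimage).continuousOn
      continuous_subtype_val.continuousOn (fun e _ ↦ hgp' _)
      mem_connectedComponent (congrArg g (Subtype.ext (hgp' v)))
  rw [connectedComponentIn_eq_image hv]
  rintro _ ⟨e, he, rfl⟩
  exact ⟨_, hlift he⟩

theorem stmt13_general {Xt X : Type} [TopologicalSpace Xt] [TopologicalSpace X]
    (p : Xt → X) (hp : IsCoveringMap p) (xt₀ : Xt)
    (V₀ : Set X) (hV₀conn : IsPathConnected V₀) [LocallyPathConnectedSpace ↥V₀]
    (hx₀ : p xt₀ ∈ V₀)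
    (himage : (fundamentalGroupMap (⟨Subtype.val, continuous_subtype_val⟩ : C(↥V₀, X))
        ⟨p xt₀, hx₀⟩).range =
      (fundamentalGroupMap ⟨p, hp.continuous⟩ xt₀).range) :
    ∃ g : C(↥V₀, Xt), (∀ v : ↥V₀, p (g v) = (v : X)) ∧ g ⟨p xt₀, hx₀⟩ = xt₀ ∧
      Topology.IsEmbedding g ∧ Set.range g = connectedComponentIn (p ⁻¹' V₀) xt₀ := by
  have := isPathConnected_iff_pathConnectedSpace.1 hV₀conn
  have hle : (FundamentalGroup.map ⟨Subtype.val, continuous_subtype_val⟩ ⟨p xt₀, hx₀⟩).range ≤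
      (FundamentalGroup.mapOfEq ⟨p, hp.continuous⟩ (rfl : p xt₀ = p xt₀)).range := by
    rw [FundamentalGroup.mapOfEq_rfl, FundamentalGroup.range_map_eq_map_range_fundamentalGroupMap,
      FundamentalGroup.range_map_eq_map_range_fundamentalGroupMap, himage]
    exact le_rfl
  obtain ⟨g, ⟨hg₀, hgp⟩, -⟩ := hp.existsUnique_continuousMap_lifts_of_range_le _ hle
  refine ⟨g, congrFun hgp, hg₀, .of_comp g.continuous hp.continuous ?_, ?_⟩
  · exact hgp ▸ IsEmbedding.subtypeVal
  · rw [hp.range_eq_connectedComponentIn g hgp ⟨p xt₀, hx₀⟩, hg₀]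

/-- Let `p : X̃ → X` be a covering map of path-connected (locally path-connected) spaces
corresponding to the subgroup `H = p_*(π₁(X̃, x̃₀)) ≤ π₁(X, x₀)` (`x₀ = p x̃₀`), and let
`V₀ ⊆ X` be a path-connected subspace containing `x₀` whose inclusion induces an
isomorphism `π₁(V₀, x₀) ≅ H` (i.e. the inclusion-induced map on `π₁` is injective with
image `H`).  Then the inclusion `V₀ ↪ X` lifts to an embedding of `V₀` into `X̃`: there
is a lift of the inclusion mapping `V₀` homeomorphically onto a component of `p⁻¹(V₀)`. -/
theorem stmt13 {Xt X : Type} [TopologicalSpace Xt] [TopologicalSpace X]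
    [PathConnectedSpace Xt] [PathConnectedSpace X]
    [LocallyPathConnectedSpace Xt] [LocallyPathConnectedSpace X]
    (p : Xt → X) (hp : IsCoveringMap p) (xt₀ : Xt)
    (V₀ : Set X) (hV₀conn : IsPathConnected V₀) [LocallyPathConnectedSpace ↥V₀]
    (hx₀ : p xt₀ ∈ V₀)
    (hinj : Function.Injective
      (fundamentalGroupMap (⟨Subtype.val, continuous_subtype_val⟩ : C(↥V₀, X))
        ⟨p xt₀, hx₀⟩))
    (himage : (fundamentalGroupMap (⟨Subtype.val, continuous_subtype_val⟩ : C(↥V₀, X))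
        ⟨p xt₀, hx₀⟩).range =
      (fundamentalGroupMap ⟨p, hp.continuous⟩ xt₀).range) :
    ∃ g : C(↥V₀, Xt), (∀ v : ↥V₀, p (g v) = (v : X)) ∧ g ⟨p xt₀, hx₀⟩ = xt₀ ∧
      Topology.IsEmbedding g ∧ Set.range g = connectedComponentIn (p ⁻¹' V₀) xt₀ :=
  stmt13_general p hp xt₀ V₀ hV₀conn hx₀ himage
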